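/- Let E be a finite-dimensional real inner product space, F : E → ℝ differentiable with gradient ∇F, and β, μ ≥ 0 such that for all u, v ∈ E: ‖∇F(u) − ∇F(v)‖ ≤ β‖u − v‖ and ‖∇F(u) − ∇F(v)‖ ≥ μ‖u − v‖. Let η ≥ 0 and c ∈ ℝ. On a probability space Ω, let x ∈ E be fixed, let X̃ : Ω → E be a square-integrable random vector, and let N : Ω → E be a square-integrable random vector independent of X̃ with E[N] = 0 and E‖N‖² = σ². Define Δ := X̃ − x and Δ' := Δ − η·(∇F(X̃) − ∇F(x)) + c·N. Then E‖Δ'‖² ≥ (1 − 2ηβ + η²μ²)·E‖Δ‖² + c²·σ². -/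

import Mathlib

open MeasureTheory ProbabilityTheory RealInnerProductSpace

/-! Independence of `N` and `X̃` together with `E[N] = 0` kills the cross term, so
`E‖Δ'‖² = E‖Δ - η • (∇F(X̃) - ∇F(x))‖² + c²σ²`. Pointwise, expanding the remaining square and
using `⟪Δ, ∇F(X̃) - ∇F(x)⟫ ≤ β‖Δ‖²` and `‖∇F(X̃) - ∇F(x)‖ ≥ μ‖Δ‖` bounds it below by
`(1 - 2ηβ + η²μ²)‖Δ‖²`. -/

theorem LipschitzWith.memLp_comp {α E F : Type*} [MeasurableSpace α] {μ : Measure α}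
    [IsFiniteMeasure μ] [NormedAddCommGroup E] [NormedAddCommGroup F] {K : NNReal}
    {p : ENNReal} {g : E → F} {f : α → E} (hg : LipschitzWith K g) (hf : MemLp f p μ) :
    MemLp (fun a => g (f a)) p μ := by
  refine ((hf.norm.const_mul K).add (memLp_const ‖g 0‖)).of_le
    (hg.continuous.comp_aestronglyMeasurable hf.1) (Filter.Eventually.of_forall fun a => ?_)
  have h := hg.norm_sub_le (f a) 0
  rw [sub_zero] at h
  calc ‖g (f a)‖ ≤ K * ‖f a‖ + ‖g 0‖ := by linarith [norm_le_insert' (g (f a)) (g 0)]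
    _ ≤ ‖K * ‖f a‖ + ‖g 0‖‖ := Real.le_norm_self _

theorem mul_norm_sq_le_norm_sub_smul_sq {E : Type*} [NormedAddCommGroup E]
    [InnerProductSpace ℝ E] {d g : E} {β μ η : ℝ} (hμ : 0 ≤ μ) (hη : 0 ≤ η)
    (hg : ‖g‖ ≤ β * ‖d‖) (hg' : μ * ‖d‖ ≤ ‖g‖) :
    (1 - 2 * η * β + η ^ 2 * μ ^ 2) * ‖d‖ ^ 2 ≤ ‖d - η • g‖ ^ 2 := by
  have hinner : ⟪d, g⟫ ≤ β * ‖d‖ ^ 2 :=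
    calc ⟪d, g⟫ ≤ ‖d‖ * ‖g‖ := real_inner_le_norm d g
      _ ≤ ‖d‖ * (β * ‖d‖) := mul_le_mul_of_nonneg_left hg (norm_nonneg d)
      _ = β * ‖d‖ ^ 2 := by ring
  have hsq : (μ * ‖d‖) ^ 2 ≤ ‖g‖ ^ 2 := pow_le_pow_left₀ (by positivity) hg' 2
  rw [norm_sub_sq_real, real_inner_smul_right, norm_smul, Real.norm_of_nonneg hη]
  nlinarith [mul_le_mul_of_nonneg_left hinner hη, mul_le_mul_of_nonneg_left hsq (sq_nonneg η)]

namespace ProbabilityTheory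

variable {E : Type*} [NormedAddCommGroup E] [InnerProductSpace ℝ E] [CompleteSpace E]
  [MeasurableSpace E] [BorelSpace E] {Ω : Type*} [MeasurableSpace Ω] {P : Measure Ω}
  {X Y : Ω → E}

theorem IndepFun.integral_inner_eq_zero (hXY : IndepFun X Y P) (hX : Integrable X P)
    (hY : Integrable Y P) (hY0 : ∫ ω, Y ω ∂P = 0) : ∫ ω, ⟪X ω, Y ω⟫ ∂P = 0 := by
  have h : ∫ ω, innerSL ℝ (X ω) (Y ω) ∂P = innerSL ℝ (∫ ω, X ω ∂P) (∫ ω, Y ω ∂P) :=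
    hXY.integral_bilin hX hY (innerSL ℝ)
  simpa only [innerSL_apply_apply, hY0, inner_zero_right] using h

theorem IndepFun.integral_norm_add_smul_sq [IsFiniteMeasure P] (hXY : IndepFun X Y P)
    (hX : MemLp X 2 P) (hY : MemLp Y 2 P) (hY0 : ∫ ω, Y ω ∂P = 0) (c : ℝ) :
    ∫ ω, ‖X ω + c • Y ω‖ ^ 2 ∂P = ∫ ω, ‖X ω‖ ^ 2 ∂P + c ^ 2 * ∫ ω, ‖Y ω‖ ^ 2 ∂P := by
  have hX1 := hX.integrable one_le_two
  have hY1 := hY.integrable one_le_two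
  have hexpand : ∀ ω, ‖X ω + c • Y ω‖ ^ 2 =
      ‖X ω‖ ^ 2 + 2 * c * ⟪X ω, Y ω⟫ + c ^ 2 * ‖Y ω‖ ^ 2 := fun ω => by
    rw [norm_add_sq_real, real_inner_smul_right, norm_smul, Real.norm_eq_abs, mul_pow, sq_abs]
    ring
  have hX2 := hX.norm.integrable_sq
  have hY2 := hY.norm.integrable_sq
  have hinner : Integrable (fun ω => ⟪X ω, Y ω⟫) P := hXY.integrable_bilin hX1 hY1 (innerSL ℝ)
  simp_rw [hexpand]
  rw [integral_add, integral_add, integral_const_mul, integral_const_mul,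
    hXY.integral_inner_eq_zero hX1 hY1 hY0, mul_zero, add_zero]
  all_goals fun_prop

end ProbabilityTheory

theorem per_round_recursion_general
    {E : Type*} [NormedAddCommGroup E] [InnerProductSpace ℝ E]
    [FiniteDimensional ℝ E] [MeasurableSpace E] [BorelSpace E]
    {Ω : Type*} [MeasurableSpace Ω] (P : Measure Ω) [IsProbabilityMeasure P]
    (G : E → E)
    (β μ : ℝ) (hμ : 0 ≤ μ)
    (hsmooth : ∀ u v : E, ‖G u - G v‖ ≤ β * ‖u - v‖)
    (hconv : ∀ u v : E, μ * ‖u - v‖ ≤ ‖G u - G v‖)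
    (η : ℝ) (hη : 0 ≤ η) (c σ : ℝ)
    (x : E) (Xt N : Ω → E)
    (hXt : MemLp Xt 2 P) (hN : MemLp N 2 P)
    (hindep : IndepFun N Xt P)
    (hmean : ∫ ω, N ω ∂P = 0) (hvar : ∫ ω, ‖N ω‖ ^ 2 ∂P = σ ^ 2) :
    (1 - 2 * η * β + η ^ 2 * μ ^ 2) * (∫ ω, ‖Xt ω - x‖ ^ 2 ∂P) + c ^ 2 * σ ^ 2 ≤
      ∫ ω, ‖(Xt ω - x) - η • (G (Xt ω) - G x) + c • N ω‖ ^ 2 ∂P := by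
  set step : E → E := fun u => (u - x) - η • (G u - G x)
  have hG : LipschitzWith β.toNNReal G :=
    LipschitzWith.of_dist_le' fun u v => by simpa only [dist_eq_norm] using hsmooth u v
  have hstep : Continuous step := by have := hG.continuous; fun_prop
  have hΔ : MemLp (fun ω => Xt ω - x) 2 P := hXt.sub (memLp_const x)
  have hstepXt : MemLp (fun ω => step (Xt ω)) 2 P :=
    hΔ.sub (((hG.memLp_comp hXt).sub (memLp_const (G x))).const_smul η)
  have hindep' : IndepFun (fun ω => step (Xt ω)) N P :=
    hindep.symm.comp hstep.measurable measurable_id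
  rw [hindep'.integral_norm_add_smul_sq hstepXt hN hmean, hvar, ← integral_const_mul]
  refine add_le_add_left (integral_mono (hΔ.norm.integrable_sq.const_mul _)
    hstepXt.norm.integrable_sq fun ω => ?_) _
  exact mul_norm_sq_le_norm_sub_smul_sq hμ hη (hsmooth (Xt ω) x) (hconv (Xt ω) x)

/-- Per-round recursion inequality in the cumulative variance theorem: with
`Δ = X̃ − x` and `Δ' = Δ − η•(∇F(X̃) − ∇F(x)) + c•N` where `N` is independent of `X̃`,
mean zero, with `E‖N‖² = σ²`, one has
`E‖Δ'‖² ≥ (1 − 2ηβ + η²μ²)·E‖Δ‖² + c²σ²`. -/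
theorem per_round_recursion
    {E : Type*} [NormedAddCommGroup E] [InnerProductSpace ℝ E]
    [FiniteDimensional ℝ E] [MeasurableSpace E] [BorelSpace E]
    {Ω : Type*} [MeasurableSpace Ω] (P : Measure Ω) [IsProbabilityMeasure P]
    (F : E → ℝ) (G : E → E) (hF : ∀ u : E, HasGradientAt F (G u) u)
    (β μ : ℝ) (hβ : 0 ≤ β) (hμ : 0 ≤ μ)
    (hsmooth : ∀ u v : E, ‖G u - G v‖ ≤ β * ‖u - v‖)
    (hconv : ∀ u v : E, μ * ‖u - v‖ ≤ ‖G u - G v‖)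
    (η : ℝ) (hη : 0 ≤ η) (c σ : ℝ)
    (x : E) (Xt N : Ω → E)
    (hXt : MemLp Xt 2 P) (hN : MemLp N 2 P)
    (hindep : IndepFun N Xt P)
    (hmean : ∫ ω, N ω ∂P = 0) (hvar : ∫ ω, ‖N ω‖ ^ 2 ∂P = σ ^ 2) :
    (1 - 2 * η * β + η ^ 2 * μ ^ 2) * (∫ ω, ‖Xt ω - x‖ ^ 2 ∂P) + c ^ 2 * σ ^ 2 ≤
      ∫ ω, ‖(Xt ω - x) - η • (G (Xt ω) - G x) + c • N ω‖ ^ 2 ∂P :=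
  per_round_recursion_general P G β μ hμ hsmooth hconv η hη c σ x Xt N hXt hN hindep hmean hvar
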